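/- arXiv:1102.1171 — 4 statements merged into one kernel-verified Lean document; each statement's English description precedes it below -/
import Mathlib

section
/- Let ζ = exp(2πi/5) ∈ ℂ. For every integer n ≥ 1 and every integer k, (1 − ζ − ζ⁴)ⁿ ≠ ζᵏ and (1 − ζ − ζ⁴)ⁿ ≠ −ζᵏ. (Consequently, since the ring homomorphism α : ℤ[C₅] → ℂ with α(t) = ζ sends every element ±γ, γ ∈ C₅, to a root of unity, the unit u = 1 − t + t² defines an element of infinite order in the Whitehead group Wh(C₅) ≅ ℤ.) -/
/-!
Since `ζ⁵ = 1` and `‖ζ‖ = 1`, we have `ζ⁴ = ζ⁻¹ = conj ζ`, so `1 − ζ − ζ⁴ = 1 − 2 cos(2π/5)` is a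
real number of absolute value `< 1`. Its positive powers therefore have norm `< 1`, whereas every
`±ζᵏ` has norm `1`.
-/

open Complex Real

theorem norm_zpow_lt_one {𝕜 : Type*} [NormedDivisionRing 𝕜] {z : 𝕜} (hz : ‖z‖ < 1) {n : ℤ}
    (hn : 1 ≤ n) : ‖z ^ n‖ < 1 := by
  lift n to ℕ using by omega
  rw [zpow_natCast, norm_pow]
  exact pow_lt_one₀ (norm_nonneg z) hz (by omega)

theorem norm_one_sub_sub_inv_lt_one {z : ℂ} (hz : ‖z‖ = 1) (h0 : 0 < z.re) (h1 : z.re < 1) :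
    ‖1 - z - z⁻¹‖ < 1 := by
  have hreal : 1 - z - z⁻¹ = ((1 - 2 * z.re : ℝ) : ℂ) := by
    rw [inv_eq_conj hz, sub_sub, add_conj]
    push_cast
    ring
  rw [hreal, norm_real, Real.norm_eq_abs, abs_lt]
  constructor <;> linarith

theorem exp_two_pi_mul_I_div_five_re : (exp (2 * π * I / 5)).re = Real.cos (2 * π / 5) := by
  rw [← exp_ofReal_mul_I_re]
  push_cast
  ring_nf

theorem cos_two_pi_div_five_pos : 0 < Real.cos (2 * π / 5) :=
  Real.cos_pos_of_mem_Ioo ⟨by linarith [pi_pos], by linarith [pi_pos]⟩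

theorem cos_two_pi_div_five_lt_one : Real.cos (2 * π / 5) < 1 := by
  simpa using Real.cos_lt_cos_of_nonneg_of_le_pi le_rfl (by linarith [pi_pos])
    (by positivity : (0 : ℝ) < 2 * π / 5)

theorem isPrimitiveRoot_exp_two_pi_mul_I_div_five : IsPrimitiveRoot (exp (2 * π * I / 5)) 5 := by
  exact_mod_cast isPrimitiveRoot_exp 5 (by norm_num)

theorem norm_one_sub_exp_two_pi_mul_I_div_five_sub_pow_four_lt_one :
    ‖1 - exp (2 * π * I / 5) - exp (2 * π * I / 5) ^ 4‖ < 1 := by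
  have hζ := isPrimitiveRoot_exp_two_pi_mul_I_div_five
  have h4 : exp (2 * π * I / 5) ^ 4 = (exp (2 * π * I / 5))⁻¹ :=
    eq_inv_of_mul_eq_one_left (by rw [← pow_succ, hζ.pow_eq_one])
  rw [h4]
  refine norm_one_sub_sub_inv_lt_one (hζ.norm'_eq_one (by norm_num)) ?_ ?_ <;>
    rw [exp_two_pi_mul_I_div_five_re]
  exacts [cos_two_pi_div_five_pos, cos_two_pi_div_five_lt_one]

open Complex in
/-- Let `ζ = exp(2πi/5) ∈ ℂ`. For every integer `n ≥ 1` and every integer `k`,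
`(1 − ζ − ζ⁴)ⁿ ≠ ζᵏ` and `(1 − ζ − ζ⁴)ⁿ ≠ −ζᵏ`. Hence the unit
`u = 1 − t + t²` has infinite order in the Whitehead group `Wh(C₅)`. -/
theorem stmt4 :
    let ζ : ℂ := Complex.exp (2 * Real.pi * Complex.I / 5)
    ∀ n : ℤ, 1 ≤ n → ∀ k : ℤ,
      (1 - ζ - ζ ^ 4) ^ n ≠ ζ ^ k ∧ (1 - ζ - ζ ^ 4) ^ n ≠ -ζ ^ k := by
  intro ζ n hn k
  have hu : ‖(1 - ζ - ζ ^ 4) ^ n‖ < 1 :=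
    norm_zpow_lt_one norm_one_sub_exp_two_pi_mul_I_div_five_sub_pow_four_lt_one hn
  have hζk : ‖ζ ^ k‖ = 1 := by
    rw [norm_zpow, isPrimitiveRoot_exp_two_pi_mul_I_div_five.norm'_eq_one (by norm_num), one_zpow]
  constructor <;> intro h <;> simp [h, hζk] at hu
end

section
/- Let p be a prime, let ζ be a primitive p-th root of unity in the cyclotomic field ℚ(ζ_p), and let R = ℤ[ζ] be the subring generated by ζ (Algebra.adjoin ℤ {ζ}). For every integer a and every v ∈ R, there exists a polynomial g ∈ ℤ[X] with g(1) = a and g(ζ) = v if and only if ζ − 1 divides v − a in R. (This is the exactness of the pullback square of rings with vertices ℤ[ℤ_p], ℤ[ζ], ℤ and 𝔽_p.) -/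
/-- Let `p` be a prime, `ζ` a primitive `p`-th root of unity in the cyclotomic
field `ℚ(ζ_p)`, and `R = ℤ[ζ]` the subring generated by `ζ`. For every integer
`a` and every `v ∈ R`, there exists a polynomial `g ∈ ℤ[X]` with `g(1) = a`
and `g(ζ) = v` if and only if `ζ − 1` divides `v − a` in `R`. -/
theorem stmt8 (p : ℕ+) (hp : (p : ℕ).Prime) (ζ : CyclotomicField p ℚ)
    (hζ : IsPrimitiveRoot ζ (p : ℕ)) (a : ℤ) (v : Algebra.adjoin ℤ ({ζ} : Set (CyclotomicField p ℚ))) :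
    (∃ g : Polynomial ℤ, g.eval 1 = a ∧ Polynomial.aeval ζ g = (v : CyclotomicField p ℚ)) ↔
      ((⟨ζ, Algebra.self_mem_adjoin_singleton ℤ ζ⟩ - 1 :
          Algebra.adjoin ℤ ({ζ} : Set (CyclotomicField p ℚ))) ∣
        (v - algebraMap ℤ (Algebra.adjoin ℤ ({ζ} : Set (CyclotomicField p ℚ))) a)) := by
  constructor
  · rintro ⟨g, hg1, hgζ⟩
    have hroot : (g - Polynomial.C a).IsRoot 1 := by simp [hg1]
    obtain ⟨q, hq⟩ := Polynomial.dvd_iff_isRoot.2 hroot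
    have hqmem : Polynomial.aeval ζ q ∈ Algebra.adjoin ℤ ({ζ} : Set (CyclotomicField p ℚ)) := by
      rw [Algebra.adjoin_singleton_eq_range_aeval]; exact ⟨q, rfl⟩
    refine ⟨⟨Polynomial.aeval ζ q, hqmem⟩, ?_⟩
    have := congrArg (Polynomial.aeval ζ) hq
    simp only [map_sub, map_mul, Polynomial.aeval_X, Polynomial.aeval_C, Polynomial.aeval_one,
      hgζ] at this
    ext
    push_cast
    simpa using this
  · rintro ⟨w, hw⟩
    obtain ⟨f, hf⟩ : ∃ f : Polynomial ℤ, Polynomial.aeval ζ f = (w : CyclotomicField p ℚ) := by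
      have hwmem : (w : CyclotomicField p ℚ) ∈ (Polynomial.aeval ζ : Polynomial ℤ →ₐ[ℤ] _).range := by
        rw [← Algebra.adjoin_singleton_eq_range_aeval]; exact w.2
      exact hwmem
    refine ⟨Polynomial.C a + (Polynomial.X - 1) * f, by simp, ?_⟩
    have hw' := congrArg (Subtype.val) hw
    push_cast at hw'
    simp only [map_add, map_mul, map_sub, Polynomial.aeval_X, Polynomial.aeval_C,
      Polynomial.aeval_one, hf]
    rw [show (ζ - 1) * (w : CyclotomicField p ℚ) = (v : CyclotomicField p ℚ) -
      algebraMap ℤ (CyclotomicField p ℚ) a from hw'.symm]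
    push_cast
    ring
end

section
/- Let p be a prime, ζ a primitive p-th root of unity in ℚ(ζ_p), R = ℤ[ζ] the subring generated by ζ, and let ev : ℤ[X]/(Xᵖ − 1) → R be the ring homomorphism induced by evaluation at ζ (well-defined since ζᵖ = 1). Then for every unit v of R, the (p−1)-st power v^{p−1} lies in the image of the unit group of ℤ[X]/(Xᵖ − 1) under ev; that is, there is a unit w of ℤ[X]/(Xᵖ − 1) with ev(w) = v^{p−1}. ("The (p−1)st power of any unit in ℤ[ζ] comes from a unit in ℤ[ℤ_p]", a consequence of the pullback square for the group ring ℤ[ℤ_p] ≅ ℤ[X]/(Xᵖ−1).) -/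
/-!
Write `Φ` for the `p`-th cyclotomic polynomial, so that `Xᵖ - 1 = Φ · (X - 1)` and `Φ(1) = p`.
A unit `v` of `ℤ[ζ] ≅ ℤ[X]/(Φ)` is `f(ζ)` with `f(1)` prime to `p`, so by Fermat
`f(1)^(p-1) = 1 + c p`, and `g = f^(p-1) - c Φ` represents `v^(p-1)` with `g(1) = 1`.
Doing the same for `v⁻¹` gives `h`, and `gh - 1` vanishes both at `ζ` and at `1`,
hence is divisible by `Xᵖ - 1`: the class of `g` is a unit of `ℤ[X]/(Xᵖ - 1)`.
-/

open Polynomial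

lemma Ideal.Quotient.apply_mk_eq_aeval {A : Type*} [CommRing A] {I : Ideal ℤ[X]}
    {S : Subalgebra ℤ A} {x : A} (hx : x ∈ S) (ev : ℤ[X] ⧸ I →+* S)
    (hev : ev (Ideal.Quotient.mk I X) = ⟨x, hx⟩) (f : ℤ[X]) :
    ev (Ideal.Quotient.mk I f) = aeval (⟨x, hx⟩ : S) f :=
  RingHom.congr_fun (f := ev.comp (Ideal.Quotient.mk I)) (g := (aeval (⟨x, hx⟩ : S)).toRingHom)
    (Polynomial.ringHom_ext (fun a => by simp) (by simpa using hev)) f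

lemma IsPrimitiveRoot.cyclotomic_dvd_of_aeval_eq_zero {K : Type*} [Field K] [CharZero K]
    {ζ : K} {n : ℕ} (hζ : IsPrimitiveRoot ζ n) (hn : 0 < n) {u : ℤ[X]} (hu : aeval ζ u = 0) :
    cyclotomic n ℤ ∣ u :=
  cyclotomic_eq_minpoly hζ hn ▸ minpoly.isIntegrallyClosed_dvd (hζ.isIntegral hn) hu

section Prime

variable {p : ℕ} [Fact p.Prime]

lemma Polynomial.dvd_eval_one_of_cyclotomic_dvd {u : ℤ[X]} (hu : cyclotomic p ℤ ∣ u) :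
    (p : ℤ) ∣ u.eval 1 := by
  obtain ⟨q, rfl⟩ := hu
  exact ⟨q.eval 1, by rw [eval_mul, eval_one_cyclotomic_prime]⟩

lemma Polynomial.X_pow_sub_one_dvd_of_cyclotomic_dvd {u : ℤ[X]} (hu : cyclotomic p ℤ ∣ u)
    (hu1 : u.eval 1 = 0) : X ^ p - 1 ∣ u := by
  obtain ⟨q, rfl⟩ := hu
  have hq1 : q.IsRoot 1 := by
    rw [eval_mul, eval_one_cyclotomic_prime] at hu1
    exact (mul_eq_zero.mp hu1).resolve_left (Nat.cast_ne_zero.mpr (Fact.out : p.Prime).ne_zero)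
  obtain ⟨r, rfl⟩ := dvd_iff_isRoot.mpr hq1
  exact ⟨r, by rw [← cyclotomic_prime_mul_X_sub_one, C_1]; ring⟩

lemma Polynomial.exists_eval_one_eq_one_and_aeval_eq_pow {A : Type*} [CommRing A] {x : A}
    (hx : aeval x (cyclotomic p ℤ) = 0) {f : ℤ[X]} (hf : IsCoprime (f.eval 1) p) :
    ∃ g : ℤ[X], g.eval 1 = 1 ∧ aeval x g = aeval x f ^ (p - 1) := by
  obtain ⟨c, hc⟩ := (Int.ModEq.pow_card_sub_one_eq_one Fact.out hf).symm.dvd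
  refine ⟨f ^ (p - 1) - C c * cyclotomic p ℤ, ?_, by simp [hx]⟩
  rw [eval_sub, eval_mul, eval_C, eval_pow, eval_one_cyclotomic_prime]
  linear_combination hc

lemma IsPrimitiveRoot.exists_eval_one_eq_one_and_aeval_eq_unit_pow {K : Type*} [Field K]
    [CharZero K] {ζ : K} (hζ : IsPrimitiveRoot ζ p) (v : (Algebra.adjoin ℤ {ζ} : Subalgebra ℤ K)ˣ) :
    ∃ g : ℤ[X], g.eval 1 = 1 ∧ aeval ζ g = (v : K) ^ (p - 1) := by
  have hp : 0 < p := (Fact.out : p.Prime).pos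
  have mem_range (y : Algebra.adjoin ℤ {ζ}) : ∃ f : ℤ[X], aeval ζ f = y :=
    (AlgHom.mem_range _).mp (Algebra.adjoin_singleton_eq_range_aeval ℤ ζ ▸ y.2)
  obtain ⟨f, hf⟩ := mem_range v
  obtain ⟨f', hf'⟩ := mem_range ↑v⁻¹
  have hff' : cyclotomic p ℤ ∣ f * f' - 1 := by
    refine hζ.cyclotomic_dvd_of_aeval_eq_zero hp ?_
    rw [map_sub, map_mul, map_one, hf, hf', sub_eq_zero]
    exact congrArg Subtype.val v.mul_inv
  have hcop : IsCoprime (f.eval 1) p := by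
    obtain ⟨k, hk⟩ := dvd_eval_one_of_cyclotomic_dvd hff'
    exact ⟨f'.eval 1, -k, by rw [eval_sub, eval_mul, eval_one] at hk; linear_combination hk⟩
  have hζroot : aeval ζ (cyclotomic p ℤ) = 0 := by
    simpa [aeval_def, eval₂_eq_eval_map, map_cyclotomic] using hζ.isRoot_cyclotomic hp
  rw [← hf]
  exact exists_eval_one_eq_one_and_aeval_eq_pow hζroot hcop

end Prime

open Polynomial in
/-- Let `p` be a prime, `ζ` a primitive `p`-th root of unity in `ℚ(ζ_p)`,
`R = ℤ[ζ]` the subring generated by `ζ`, and `ev : ℤ[X]/(Xᵖ − 1) → R` the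
ring homomorphism induced by evaluation at `ζ` (i.e. sending the class of `X`
to `ζ`). Then for every unit `v` of `R` the `(p−1)`-st power `v^(p−1)` lies in
the image of the unit group of `ℤ[X]/(Xᵖ − 1)` under `ev`. -/
theorem stmt10 (p : ℕ+) (hp : (p : ℕ).Prime) (ζ : CyclotomicField p ℚ)
    (hζ : IsPrimitiveRoot ζ (p : ℕ))
    (ev : (Polynomial ℤ ⧸ Ideal.span ({X ^ (p : ℕ) - 1} : Set (Polynomial ℤ))) →+*
      Algebra.adjoin ℤ ({ζ} : Set (CyclotomicField p ℚ)))
    (hev : ev (Ideal.Quotient.mk _ X) = ⟨ζ, Algebra.self_mem_adjoin_singleton ℤ ζ⟩) :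
    ∀ v : (Algebra.adjoin ℤ ({ζ} : Set (CyclotomicField p ℚ)))ˣ,
      ∃ w : (Polynomial ℤ ⧸ Ideal.span ({X ^ (p : ℕ) - 1} : Set (Polynomial ℤ)))ˣ,
        ev w = (v : Algebra.adjoin ℤ ({ζ} : Set (CyclotomicField p ℚ))) ^ ((p : ℕ) - 1) := by
  have : Fact (p : ℕ).Prime := ⟨hp⟩
  intro v
  obtain ⟨g, hg1, hgζ⟩ := hζ.exists_eval_one_eq_one_and_aeval_eq_unit_pow v
  obtain ⟨h, hh1, hhζ⟩ := hζ.exists_eval_one_eq_one_and_aeval_eq_unit_pow v⁻¹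
  have hgh : X ^ (p : ℕ) - 1 ∣ g * h - 1 := by
    refine X_pow_sub_one_dvd_of_cyclotomic_dvd (hζ.cyclotomic_dvd_of_aeval_eq_zero p.pos ?_)
      (by simp [hg1, hh1])
    rw [map_sub, map_mul, map_one, hgζ, hhζ, ← mul_pow, sub_eq_zero]
    exact (congrArg (· ^ ((p : ℕ) - 1)) (congrArg Subtype.val v.mul_inv)).trans (one_pow _)
  have hmul : Ideal.Quotient.mk (Ideal.span {X ^ (p : ℕ) - 1}) g * Ideal.Quotient.mk _ h = 1 := by
    rw [← map_mul, ← map_one (Ideal.Quotient.mk _), Ideal.Quotient.mk_eq_mk_iff_sub_mem]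
    exact Ideal.mem_span_singleton.mpr hgh
  refine ⟨⟨_, _, hmul, (mul_comm _ _).trans hmul⟩, Subtype.ext ?_⟩
  rw [Ideal.Quotient.apply_mk_eq_aeval _ ev hev]
  exact (aeval_subalgebra_coe g _ _).trans hgζ
end

section
/- Let Γ = C₄ × C₂ × C₂ with g the image in the group ring ℤ[Γ] of a generator of the C₄ factor and h₁, h₂ the images of the generators of the two C₂ factors. Then the 2×2 matrix over ℤ[Γ] with entries M₁₁ = 1 + 8(1−g²)(1+h₁)(1+h₂)(1−g), M₁₂ = −(1−g²)(1+h₁)(1+h₂)(3+g), M₂₁ = −13(1−g²)(1+h₁)(1+h₂)(3−g), M₂₂ = 1 + 8(1−g²)(1+h₁)(1+h₂)(1+g) has determinant 1; in particular it lies in GL(2, ℤ[Γ]). (This matrix represents the nontrivial element of SK₁(ℤ[Γ]) ≅ ℤ/2.) -/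
/-- Let `Γ = C₄ × C₂ × C₂` with `g, h₁, h₂` the images in the integral group
ring `ℤ[Γ]` of the evident generators. Then Oliver's `2×2` matrix over `ℤ[Γ]`
has determinant `1`; in particular it lies in `GL(2, ℤ[Γ])`. -/
theorem stmt11 :
    let Γ := Multiplicative (ZMod 4) × Multiplicative (ZMod 2) × Multiplicative (ZMod 2)
    let g : MonoidAlgebra ℤ Γ :=
      MonoidAlgebra.of ℤ Γ (Multiplicative.ofAdd (1 : ZMod 4), 1, 1)
    let h₁ : MonoidAlgebra ℤ Γ :=
      MonoidAlgebra.of ℤ Γ (1, Multiplicative.ofAdd (1 : ZMod 2), 1)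
    let h₂ : MonoidAlgebra ℤ Γ :=
      MonoidAlgebra.of ℤ Γ (1, 1, Multiplicative.ofAdd (1 : ZMod 2))
    let M : Matrix (Fin 2) (Fin 2) (MonoidAlgebra ℤ Γ) :=
      !![1 + 8 * (1 - g ^ 2) * (1 + h₁) * (1 + h₂) * (1 - g),
          -((1 - g ^ 2) * (1 + h₁) * (1 + h₂) * (3 + g));
        -(13 * (1 - g ^ 2) * (1 + h₁) * (1 + h₂) * (3 - g)),
          1 + 8 * (1 - g ^ 2) * (1 + h₁) * (1 + h₂) * (1 + g)]
    M.det = 1 ∧ IsUnit M := by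
  intro Γ g h₁ h₂ M
  have hg : g ^ 4 = 1 := by
    show MonoidAlgebra.of ℤ Γ _ ^ 4 = 1
    rw [← map_pow]
    have : ((Multiplicative.ofAdd (1 : ZMod 4), 1, 1) : Γ) ^ 4 = 1 := by decide
    rw [this, map_one]
  have hh1 : h₁ ^ 2 = 1 := by
    show MonoidAlgebra.of ℤ Γ _ ^ 2 = 1
    rw [← map_pow]
    have : ((1, Multiplicative.ofAdd (1 : ZMod 2), 1) : Γ) ^ 2 = 1 := by decide
    rw [this, map_one]
  have hh2 : h₂ ^ 2 = 1 := by
    show MonoidAlgebra.of ℤ Γ _ ^ 2 = 1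
    rw [← map_pow]
    have : ((1, 1, Multiplicative.ofAdd (1 : ZMod 2)) : Γ) ^ 2 = 1 := by decide
    rw [this, map_one]
  have hdet : M.det = 1 := by
    show (!![1 + 8 * (1 - g ^ 2) * (1 + h₁) * (1 + h₂) * (1 - g),
          -((1 - g ^ 2) * (1 + h₁) * (1 + h₂) * (3 + g));
        -(13 * (1 - g ^ 2) * (1 + h₁) * (1 + h₂) * (3 - g)),
          1 + 8 * (1 - g ^ 2) * (1 + h₁) * (1 + h₂) * (1 + g)] :
        Matrix (Fin 2) (Fin 2) (MonoidAlgebra ℤ Γ)).det = 1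
    rw [Matrix.det_fin_two_of]
    linear_combination
      ((49 : MonoidAlgebra ℤ Γ) + 98*h₂ + 49*h₂^2 + 98*h₁ + 196*h₁*h₂ + 98*h₁*h₂^2
        + 49*h₁^2 + 98*h₁^2*h₂ + 49*h₁^2*h₂^2 - 51*g^2 - 102*g^2*h₂ - 51*g^2*h₂^2
        - 102*g^2*h₁ - 204*g^2*h₁*h₂ - 102*g^2*h₁*h₂^2 - 51*g^2*h₁^2
        - 102*g^2*h₁^2*h₂ - 51*g^2*h₁^2*h₂^2) * hg
      + ((-4 : MonoidAlgebra ℤ Γ) - 8*h₂ - 4*h₂^2 + 4*g^2 + 8*g^2*h₂ + 4*g^2*h₂^2) * hh1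
      + ((-8 : MonoidAlgebra ℤ Γ) - 8*h₁ + 8*g^2 + 8*g^2*h₁) * hh2
  exact ⟨hdet, (Matrix.isUnit_iff_isUnit_det M).mpr (hdet ▸ isUnit_one)⟩
end
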